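/- arXiv:1206.2358 — 7 statements merged into one kernel-verified Lean document; each statement's English description precedes it below -/
import Mathlib

section
/- For a monic polynomial p of degree n over the complex numbers with roots λ₁,…,λₙ (with multiplicity), p has exactly n−k distinct complex roots if and only if sDisc₀(p) = ⋯ = sDisc_{k−1}(p) = 0 and sDisc_k(p) ≠ 0, where sDisc_j(p) := Σ_{1≤i₁<⋯<i_{n−j}≤n} ∏_{a<b} (λ_{i_a} − λ_{i_b})². -/
/-!
A term of `sDisc_j` vanishes unless the `n - j` chosen roots are pairwise distinct, so
`sDisc_j = 0` as soon as `n - j` exceeds the number `m` of distinct roots. For `j = n - m`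
the surviving terms are indexed by the `m`-subsets on which `λ` is injective; each of them
hits every distinct root exactly once, so all of them equal the same nonzero discriminant of
the distinct roots, and `sDisc_{n-m}` is a positive integer multiple of it.
-/

/-- The `k`-th subdiscriminant of a family of `n` roots `lam`:
`sDisc_k = Σ_{1≤i₁<⋯<i_{n−k}≤n} ∏_{a<b} (λ_{i_a} − λ_{i_b})²`. -/
noncomputable def sDiscVal {F : Type*} [CommRing F] (n k : ℕ) (lam : Fin n → F) : F :=
  ∑ s ∈ Finset.powersetCard (n - k) (Finset.univ : Finset (Fin n)),
    ∏ p ∈ (s ×ˢ s).filter (fun p => p.1 < p.2), (lam p.1 - lam p.2) ^ 2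

open Finset Polynomial

namespace Finset

theorem prod_offDiag_eq_prod_lt {ι M : Type*} [LinearOrder ι] [CommMonoid M]
    (s : Finset ι) (f : ι → ι → M) :
    ∏ x ∈ s.offDiag, f x.1 x.2 = ∏ x ∈ s ×ˢ s with x.1 < x.2, f x.1 x.2 * f x.2 x.1 := by
  have hsplit : s.offDiag = {x ∈ s ×ˢ s | x.1 < x.2}.disjUnion {x ∈ s ×ˢ s | x.2 < x.1}
      (by grind [disjoint_left]) := by grind
  rw [hsplit, prod_disjUnion, prod_mul_distrib]
  congr 1
  exact prod_nbij' Prod.swap Prod.swap (by grind) (by grind) (by simp) (by simp) (by simp)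

theorem prod_offDiag_image {α β M : Type*} [DecidableEq α] [DecidableEq β] [CommMonoid M]
    {s : Finset α} {f : α → β} (hf : Set.InjOn f s) (g : β → β → M) :
    ∏ y ∈ (s.image f).offDiag, g y.1 y.2 = ∏ x ∈ s.offDiag, g (f x.1) (f x.2) := by
  refine (prod_nbij (Prod.map f f) ?_ ?_ ?_ fun _ _ => rfl).symm
  · simp only [mem_offDiag, Prod.map_fst, Prod.map_snd, mem_image]
    exact fun _ ⟨h1, h2, hne⟩ => ⟨⟨_, h1, rfl⟩, ⟨_, h2, rfl⟩, fun h => hne (hf h1 h2 h)⟩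
  · rintro ⟨a, b⟩ hab ⟨c, d⟩ hcd h
    simp only [coe_offDiag, Set.mem_offDiag, mem_coe, Prod.map_apply, Prod.mk.injEq] at hab hcd h
    rw [hf hab.1 hcd.1 h.1, hf hab.2.1 hcd.2.1 h.2]
  · rintro ⟨_, _⟩ hy
    simp only [coe_offDiag, Set.mem_offDiag, coe_image, Set.mem_image, mem_coe] at hy
    obtain ⟨⟨a, ha, rfl⟩, ⟨b, hb, rfl⟩, hne⟩ := hy
    exact ⟨(a, b), by simpa using ⟨ha, hb, fun h => hne (congrArg f h)⟩, rfl⟩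

end Finset

section Subdiscriminant

variable {ι F : Type*} [LinearOrder ι] [CommRing F]

def sDiscTerm (lam : ι → F) (s : Finset ι) : F :=
  ∏ x ∈ s ×ˢ s with x.1 < x.2, (lam x.1 - lam x.2) ^ 2

theorem sDiscVal_eq_sum_sDiscTerm (n j : ℕ) (lam : Fin n → F) :
    sDiscVal n j lam = ∑ s ∈ powersetCard (n - j) univ, sDiscTerm lam s := rfl

theorem sDiscTerm_eq_zero_of_not_injOn {lam : ι → F} {s : Finset ι}
    (h : ¬ Set.InjOn lam s) : sDiscTerm lam s = 0 := by
  simp only [Set.InjOn, mem_coe, not_forall] at h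
  obtain ⟨a, ha, b, hb, hab, hne⟩ := h
  rcases lt_or_gt_of_ne hne with hlt | hlt
  · exact prod_eq_zero (i := (a, b)) (by simp [ha, hb, hlt]) (by simp [hab])
  · exact prod_eq_zero (i := (b, a)) (by simp [ha, hb, hlt]) (by simp [hab])

theorem sDiscTerm_eq_of_injOn [DecidableEq F] {lam : ι → F} {s : Finset ι}
    (h : Set.InjOn lam s) :
    sDiscTerm lam s = (-1) ^ (#s).choose 2 * ∏ y ∈ (s.image lam).offDiag, (y.1 - y.2) := by
  have hsign :
      ∏ y ∈ (s.image lam).offDiag, (y.1 - y.2) = (-1) ^ (#s).choose 2 * sDiscTerm lam s := by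
    rw [prod_offDiag_image h, prod_offDiag_eq_prod_lt s fun a b => lam a - lam b,
      ← card_product_filter_lt, ← prod_const, sDiscTerm, ← prod_mul_distrib]
    exact prod_congr rfl fun _ _ => by ring
  rw [hsign, ← mul_assoc, ← pow_add, Even.neg_one_pow ⟨_, rfl⟩, one_mul]

theorem sDiscVal_eq_zero_of_card_image_lt [DecidableEq F] {n j : ℕ} {lam : Fin n → F}
    (h : #(univ.image lam) < n - j) : sDiscVal n j lam = 0 := by
  refine sum_eq_zero fun s hs => sDiscTerm_eq_zero_of_not_injOn fun hinj => ?_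
  have hcard : #(s.image lam) ≤ #(univ.image lam) :=
    card_le_card (image_subset_image s.subset_univ)
  rw [card_image_of_injOn hinj, (mem_powersetCard.1 hs).2] at hcard
  omega

theorem sDiscVal_ne_zero [IsDomain F] [CharZero F] [DecidableEq F] {n : ℕ} (lam : Fin n → F) :
    sDiscVal n (n - #(univ.image lam)) lam ≠ 0 := by
  set T := univ.image lam
  set m := #T
  have hm : m ≤ n := card_image_le.trans_eq (card_fin n)
  set D := ∏ y ∈ T.offDiag, (y.1 - y.2)
  set Q : Finset (Finset (Fin n)) := {s ∈ powersetCard m univ | Set.InjOn lam s}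
  have hterm : ∀ s ∈ Q, sDiscTerm lam s = (-1) ^ m.choose 2 * D := by
    intro s hs
    obtain ⟨hsm, hinj⟩ := mem_filter.1 hs
    have hcard : #s = m := (mem_powersetCard.1 hsm).2
    have himage : s.image lam = T := eq_of_subset_of_card_le (image_subset_image s.subset_univ)
      (by rw [card_image_of_injOn hinj, hcard])
    rw [sDiscTerm_eq_of_injOn hinj, himage, hcard]
  have hQ : Q.Nonempty := by
    obtain ⟨s, -, hinj, himage⟩ :=
      exists_subset_injOn_image_eq_of_surjOn (f := lam) Set.univ T (by simp [T, Set.SurjOn])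
    have hcard : #s = m := by rw [← card_image_of_injOn hinj, himage]
    exact ⟨s, mem_filter.2 ⟨mem_powersetCard.2 ⟨s.subset_univ, hcard⟩, hinj⟩⟩
  have hD : D ≠ 0 := prod_ne_zero_iff.2 fun y hy => sub_ne_zero.2 (mem_offDiag.1 hy).2.2
  rw [sDiscVal_eq_sum_sDiscTerm, Nat.sub_sub_self hm,
    ← sum_filter_of_ne fun s _ hs => not_not.1 (mt sDiscTerm_eq_zero_of_not_injOn hs),
    sum_eq_card_nsmul hterm, nsmul_eq_mul]
  exact mul_ne_zero (Nat.cast_ne_zero.2 hQ.card_ne_zero) (mul_ne_zero (by simp) hD)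

end Subdiscriminant

theorem roots_prod_X_sub_C_toFinset {ι F : Type*} [Fintype ι] [CommRing F] [IsDomain F]
    [DecidableEq F] (lam : ι → F) :
    (∏ i, (X - C (lam i))).roots.toFinset = univ.image lam := by
  rw [roots_prod _ _ (prod_ne_zero_iff.2 fun i _ => X_sub_C_ne_zero _)]
  ext
  simp

theorem stmt0_general (n k : ℕ) (hk : k ≤ n - 1)
    (p : Polynomial ℂ) (lam : Fin n → ℂ)
    (hp : p = ∏ i, (Polynomial.X - Polynomial.C (lam i))) :
    p.roots.toFinset.card = n - k ↔
      ((∀ j < k, sDiscVal n j lam = 0) ∧ sDiscVal n k lam ≠ 0) := by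
  rw [hp, roots_prod_X_sub_C_toFinset]
  have hm : #(univ.image lam) ≤ n := card_image_le.trans_eq (card_fin n)
  constructor
  · intro hmk
    refine ⟨fun j hj => sDiscVal_eq_zero_of_card_image_lt (by omega), ?_⟩
    simpa [hmk, Nat.sub_sub_self (hk.trans (Nat.sub_le n 1))] using sDiscVal_ne_zero lam
  · rintro ⟨hzero, hk_ne⟩
    have hlower : ¬ #(univ.image lam) < n - k := fun h =>
      hk_ne (sDiscVal_eq_zero_of_card_image_lt h)
    have hupper : ¬ n - #(univ.image lam) < k := fun h => sDiscVal_ne_zero lam (hzero _ h)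
    omega

/-- A monic polynomial `p = ∏ (x − λᵢ)` of degree `n` has exactly `n − k` distinct
complex roots iff `sDisc₀(p) = ⋯ = sDisc_{k−1}(p) = 0` and `sDisc_k(p) ≠ 0`. -/
theorem stmt0 (n k : ℕ) (hn : 1 ≤ n) (hk : k ≤ n - 1)
    (p : Polynomial ℂ) (lam : Fin n → ℂ)
    (hp : p = ∏ i, (Polynomial.X - Polynomial.C (lam i))) :
    p.roots.toFinset.card = n - k ↔
      ((∀ j < k, sDiscVal n j lam = 0) ∧ sDiscVal n k lam ≠ 0) :=
  stmt0_general n k hk p lam hp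
end

section
/- An n×n complex matrix A has exactly n−k distinct eigenvalues if and only if sDisc₀(A) = ⋯ = sDisc_{k−1}(A) = 0 and sDisc_k(A) ≠ 0. -/
/-! If `m` is the number of distinct values of `lam`, the term of `sDisc_j` indexed by a set `s`
of indices vanishes exactly when `lam` is not injective on `s`. A set of more than `m` indices
always carries a repeated value, so `sDisc_j = 0` for `j < n - m`. A set of exactly `m` indices on
which `lam` is injective hits every value once, so all nonzero terms of `sDisc_{n-m}` equal the
discriminant of the set of values; there is at least one such term, so in characteristic zero
`sDisc_{n-m} ≠ 0`. Hence `n - m` is the least `j` with `sDisc_j ≠ 0`. -/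

open Finset

theorem Finset.prod_sym2_filter_not_isDiag {ι M : Type*} [LinearOrder ι] [CommMonoid M]
    (s : Finset ι) (p : Sym2 ι → M) :
    ∏ i ∈ s.sym2 with ¬ i.IsDiag, p i = ∏ i ∈ s.offDiag with i.1 < i.2, p s(i.1, i.2) :=
  sum_sym2_filter_not_isDiag (M := Additive M) s p

theorem Set.InjOn.sym2_map {α β : Type*} {f : α → β} {s : Finset α} (hf : Set.InjOn f s) :
    Set.InjOn (Sym2.map f) (s.sym2 : Set (Sym2 α)) := by
  rintro ⟨a, b⟩ hab ⟨c, d⟩ hcd heq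
  simp only [mem_coe, Finset.mk_mem_sym2_iff, Sym2.map_mk, Sym2.eq_iff] at hab hcd heq ⊢
  rcases heq with ⟨hac, hbd⟩ | ⟨had, hbc⟩
  · exact .inl ⟨hf hab.1 hcd.1 hac, hf hab.2 hcd.2 hbd⟩
  · exact .inr ⟨hf hab.1 hcd.2 had, hf hab.2 hcd.1 hbc⟩

theorem Sym2.isDiag_map_iff_of_injOn {α β : Type*} {f : α → β} {s : Finset α}
    (hf : Set.InjOn f s) {e : Sym2 α} (he : e ∈ s.sym2) : (e.map f).IsDiag ↔ e.IsDiag := by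
  induction e using Sym2.ind with
  | _ a b =>
    rw [mk_mem_sym2_iff] at he
    simp only [Sym2.map_mk, Sym2.mk_isDiag_iff, hf.eq_iff he.1 he.2]

section Discriminants

variable {ι F : Type*} [LinearOrder ι] [CommRing F]

def sqDiff : Sym2 F → F := Sym2.lift ⟨fun x y => (x - y) ^ 2, fun x y => by ring⟩

def setDiscr [DecidableEq F] (T : Finset F) : F := ∏ e ∈ T.sym2 with ¬ e.IsDiag, sqDiff e

def famDiscr (lam : ι → F) (s : Finset ι) : F :=
  ∏ p ∈ (s ×ˢ s).filter (fun p => p.1 < p.2), (lam p.1 - lam p.2) ^ 2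

theorem setDiscr_ne_zero [IsDomain F] [DecidableEq F] (T : Finset F) : setDiscr T ≠ 0 := by
  refine prod_ne_zero_iff.2 fun e he => ?_
  induction e using Sym2.ind with
  | _ x y =>
    simp only [mem_filter, Sym2.mk_isDiag_iff] at he
    simpa [sqDiff, sub_eq_zero] using he.2

theorem famDiscr_eq_zero_iff [IsDomain F] (lam : ι → F) (s : Finset ι) :
    famDiscr lam s = 0 ↔ ¬ Set.InjOn lam s := by
  simp only [famDiscr, prod_eq_zero_iff, mem_filter, mem_product, pow_eq_zero_iff two_ne_zero,
    sub_eq_zero, Prod.exists, Set.InjOn, mem_coe, not_forall]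
  constructor
  · rintro ⟨a, b, ⟨⟨ha, hb⟩, hab⟩, heq⟩
    exact ⟨a, ha, b, hb, heq, hab.ne⟩
  · rintro ⟨a, ha, b, hb, heq, hab⟩
    rcases lt_or_gt_of_ne hab with hlt | hgt
    · exact ⟨a, b, ⟨⟨ha, hb⟩, hlt⟩, heq⟩
    · exact ⟨b, a, ⟨⟨hb, ha⟩, hgt⟩, heq.symm⟩

theorem famDiscr_eq_setDiscr_image [DecidableEq F] {lam : ι → F} {s : Finset ι}
    (hinj : Set.InjOn lam s) : famDiscr lam s = setDiscr (s.image lam) := by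
  have hpairs : (s ×ˢ s).filter (fun p => p.1 < p.2) = s.offDiag.filter (fun p => p.1 < p.2) := by
    ext ⟨a, b⟩
    simp only [mem_filter, mem_product, mem_offDiag]
    exact ⟨fun h => ⟨⟨h.1.1, h.1.2, h.2.ne⟩, h.2⟩, fun h => ⟨⟨h.1.1, h.1.2.1⟩, h.2⟩⟩
  rw [setDiscr, sym2_image, filter_image,
    prod_image (hinj.sym2_map.mono (coe_subset.2 (filter_subset _ _))),
    filter_congr fun e he => not_congr (Sym2.isDiag_map_iff_of_injOn hinj he),
    prod_sym2_filter_not_isDiag, famDiscr, hpairs]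
  rfl

end Discriminants

section Subdiscriminants

variable {F : Type*} [CommRing F] {n : ℕ}

theorem sDiscVal_eq_sum_famDiscr (j : ℕ) (lam : Fin n → F) :
    sDiscVal n j lam = ∑ s ∈ powersetCard (n - j) univ, famDiscr lam s := rfl

variable [IsDomain F] [DecidableEq F]

theorem sDiscVal_eq_zero_of_lt {j : ℕ} (lam : Fin n → F) (hj : j < n - #(univ.image lam)) :
    sDiscVal n j lam = 0 := by
  refine sum_eq_zero fun s hs => (famDiscr_eq_zero_iff lam s).2 fun hinj => ?_
  have hcard := card_le_card (image_subset_image (f := lam) (subset_univ s))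
  rw [card_image_of_injOn hinj, mem_powersetCard_univ.1 hs] at hcard
  omega

theorem sDiscVal_sub_card_image_ne_zero [CharZero F] (lam : Fin n → F) :
    sDiscVal n (n - #(univ.image lam)) lam ≠ 0 := by
  set T := univ.image lam
  have hTn : #T ≤ n := card_image_le.trans_eq (card_fin n)
  have hterm : ∀ s ∈ powersetCard #T univ,
      famDiscr lam s = if Set.InjOn lam s then setDiscr T else 0 := by
    intro s hs
    split_ifs with hinj
    · rw [famDiscr_eq_setDiscr_image hinj,
        eq_of_subset_of_card_le (image_subset_image (subset_univ s))
          (by rw [card_image_of_injOn hinj, mem_powersetCard_univ.1 hs])]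
    · exact (famDiscr_eq_zero_iff lam s).2 hinj
  obtain ⟨u, -, hinj, hu⟩ :=
    exists_subset_injOn_image_eq_of_surjOn Set.univ T fun x hx => by simpa [T] using hx
  rw [sDiscVal_eq_sum_famDiscr, Nat.sub_sub_self hTn, sum_congr rfl hterm, ← sum_filter,
    sum_const, nsmul_eq_mul]
  refine mul_ne_zero (Nat.cast_ne_zero.2 (card_ne_zero_of_mem (mem_filter.2 ⟨?_, hinj⟩)))
    (setDiscr_ne_zero T)
  rw [mem_powersetCard_univ, ← hu, card_image_of_injOn hinj]

end Subdiscriminants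

theorem stmt2_general (n k : ℕ) (hk : k ≤ n - 1) (lam : Fin n → ℂ) :
    (Finset.univ.image lam).card = n - k ↔
      ((∀ j < k, sDiscVal n j lam = 0) ∧ sDiscVal n k lam ≠ 0) := by
  have hmn : #(univ.image lam) ≤ n := card_image_le.trans_eq (card_fin n)
  constructor
  · intro hcard
    obtain rfl : k = n - #(univ.image lam) := by omega
    exact ⟨fun j hj => sDiscVal_eq_zero_of_lt lam hj, sDiscVal_sub_card_image_ne_zero lam⟩
  · rintro ⟨hbelow, hk_ne⟩
    have hle := not_lt.1 fun h => hk_ne (sDiscVal_eq_zero_of_lt lam h)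
    have hge := not_lt.1 fun h => sDiscVal_sub_card_image_ne_zero lam (hbelow _ h)
    omega

/-- An `n×n` complex matrix `A` with eigenvalues `λ₁,…,λₙ` (roots of the characteristic
polynomial with multiplicity) has exactly `n−k` distinct eigenvalues iff
`sDisc₀(A) = ⋯ = sDisc_{k−1}(A) = 0` and `sDisc_k(A) ≠ 0`. -/
theorem stmt2 (n k : ℕ) (hn : 1 ≤ n) (hk : k ≤ n - 1)
    (A : Matrix (Fin n) (Fin n) ℂ) (lam : Fin n → ℂ)
    (hA : A.charpoly = ∏ i, (Polynomial.X - Polynomial.C (lam i))) :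
    (Finset.univ.image lam).card = n - k ↔
      ((∀ j < k, sDiscVal n j lam = 0) ∧ sDiscVal n k lam ≠ 0) :=
  stmt2_general n k hk lam
end

section
/- Let F be a field of characteristic zero and let τ : F[x₁,…,xₙ] → F[x₁,…,xₙ]^{Sₙ}, τ(f) = (1/n!) Σ_{g∈Sₙ} g·f, be the symmetrization (Reynolds) operator. For any monomial m = x₁^{α₁}⋯xₙ^{αₙ} with α₁ + ⋯ + α_{n−k} < (n−k)(n−k−1)/2, one has τ(m · δ(x₁,…,x_{n−k})) = 0. -/
/-- The Vandermonde product `δ(x₁,…,x_{n−k}) = ∏_{1≤a<b≤n−k}(x_a − x_b)` inside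
the polynomial ring in `n` variables. -/
noncomputable def vandermondeDelta (F : Type*) [CommRing F] (n k : ℕ) : MvPolynomial (Fin n) F :=
  ∏ p ∈ (Finset.univ : Finset (Fin (n - k) × Fin (n - k))).filter (fun p => p.1 < p.2),
    (MvPolynomial.X (Fin.castLE (Nat.sub_le n k) p.1) -
      MvPolynomial.X (Fin.castLE (Nat.sub_le n k) p.2))

/-- The Reynolds (symmetrization) operator `τ(f) = (1/n!) Σ_{g∈Sₙ} g·f`. -/
noncomputable def reynolds (F : Type*) [Field F] (n : ℕ) (f : MvPolynomial (Fin n) F) :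
    MvPolynomial (Fin n) F :=
  ((n.factorial : F)⁻¹) • ∑ g : Equiv.Perm (Fin n), MvPolynomial.rename (⇑g) f

/-!
Among the first `n − k` exponents two must coincide, say `α_a = α_b`: distinct exponents would
sum to at least `0 + 1 + ⋯ + (n−k−1)`. The transposition of `x_a` and `x_b` then fixes the
monomial and negates `δ`, so `f = m · δ` satisfies `(a b) · f = −f`. As `τ` is invariant under
every permutation, `τ f = τ(−f) = −τ f`, hence `τ f = 0` in characteristic `≠ 2`.
-/

open Finset MvPolynomial

theorem sum_range_le_sum_of_injective {m : ℕ} {f : Fin m → ℕ} (hf : Function.Injective f) :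
    ∑ i ∈ range m, i ≤ ∑ i, f i := by
  have hf' : Function.Injective fun i => (f i : ℤ) := Nat.cast_injective.comp hf
  have hbound := sum_range_le_sum (s := univ.image fun i => (f i : ℤ)) (c := 0) (by simp)
  rw [card_image_of_injective _ hf', card_univ, Fintype.card_fin,
    sum_image fun a _ b _ h => hf' h] at hbound
  have hcast : ((∑ i ∈ range m, i : ℕ) : ℤ) ≤ ((∑ i, f i : ℕ) : ℤ) := by
    push_cast
    simpa only [zero_add] using hbound
  exact_mod_cast hcast

theorem prod_filter_fst_lt_snd {M : Type*} [CommMonoid M] {m : ℕ} (f : Fin m → Fin m → M) :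
    ∏ p ∈ (univ : Finset (Fin m × Fin m)).filter (fun p => p.1 < p.2), f p.1 p.2
      = ∏ i, ∏ j ∈ Ioi i, f i j := by
  rw [prod_sigma']
  exact prod_nbij' (fun p => ⟨p.1, p.2⟩) (fun p => (p.1, p.2))
    (by simp) (by simp) (by simp) (by simp) (by simp)

theorem rename_prod_X_pow_of_apply_eq {ι R : Type*} [Fintype ι] [CommSemiring R]
    {α : ι → ℕ} {σ : Equiv.Perm ι} (hσ : ∀ i, α (σ i) = α i) :
    rename σ (∏ i, X i ^ α i : MvPolynomial ι R) = ∏ i, X i ^ α i := by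
  simp only [map_prod, map_pow, rename_X]
  exact Fintype.prod_equiv σ _ _ fun i => by rw [hσ]

theorem rename_swap_vandermondeDelta (F : Type*) [CommRing F] {n k : ℕ} {a b : Fin (n - k)}
    (hab : a ≠ b) :
    rename (Equiv.swap (Fin.castLE (Nat.sub_le n k) a) (Fin.castLE (Nat.sub_le n k) b))
      (vandermondeDelta F n k) = -vandermondeDelta F n k := by
  have hc := Fin.castLE_injective (Nat.sub_le n k)
  rw [vandermondeDelta, prod_filter_fst_lt_snd (fun i j => X (Fin.castLE _ i) - X (Fin.castLE _ j))]
  simp only [map_prod, map_sub, rename_X, hc.swap_apply]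
  rw [(Equiv.swap a b).prod_Ioi_comp_eq_sign_mul_prod
    (f := fun i j => (X (Fin.castLE _ i) - X (Fin.castLE _ j) : MvPolynomial (Fin n) F))
    (fun _ _ => by ring), Equiv.Perm.sign_swap hab]
  simp

section Reynolds

variable {F : Type*} [Field F] {n : ℕ}

theorem reynolds_rename (σ : Equiv.Perm (Fin n)) (f : MvPolynomial (Fin n) F) :
    reynolds F n (rename σ f) = reynolds F n f := by
  simp only [reynolds, rename_rename]
  congr 1
  exact Equiv.sum_comp (Equiv.mulRight σ) fun g => rename g f

theorem reynolds_neg (f : MvPolynomial (Fin n) F) : reynolds F n (-f) = -reynolds F n f := by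
  simp [reynolds, smul_sum]

theorem reynolds_eq_zero_of_rename_eq_neg (h2 : (2 : F) ≠ 0) {σ : Equiv.Perm (Fin n)}
    {f : MvPolynomial (Fin n) F} (hσ : rename σ f = -f) : reynolds F n f = 0 := by
  have hneg : reynolds F n f = -reynolds F n f := by
    rw [← reynolds_neg, ← hσ, reynolds_rename]
  have htwo : (2 : F) • reynolds F n f = 0 := by
    rw [two_smul]
    nth_rewrite 2 [hneg]
    exact add_neg_cancel _
  exact (smul_eq_zero.mp htwo).resolve_left h2

end Reynolds

theorem stmt7_general (F : Type*) [Field F] [CharZero F] (n k : ℕ)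
    (α : Fin n → ℕ)
    (hdeg : 2 * ∑ i : Fin (n - k), α (Fin.castLE (Nat.sub_le n k) i) < (n - k) * (n - k - 1)) :
    reynolds F n ((∏ i, MvPolynomial.X i ^ α i) * vandermondeDelta F n k) = 0 := by
  set c := Fin.castLE (Nat.sub_le n k)
  obtain ⟨a, b, hαab, hab⟩ : ∃ a b, α (c a) = α (c b) ∧ a ≠ b := by
    by_contra! hinj
    have hsum := sum_range_le_sum_of_injective (f := fun i => α (c i)) hinj
    have := sum_range_id_mul_two (n - k)
    omega
  refine reynolds_eq_zero_of_rename_eq_neg two_ne_zero (σ := Equiv.swap (c a) (c b)) ?_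
  rw [map_mul, rename_prod_X_pow_of_apply_eq (Equiv.apply_swap_eq_self hαab),
    rename_swap_vandermondeDelta F hab, mul_neg]

/-- If `α₁ + ⋯ + α_{n−k} < (n−k)(n−k−1)/2`, then
`τ(x₁^{α₁}⋯xₙ^{αₙ} · δ(x₁,…,x_{n−k})) = 0`. -/
theorem stmt7 (F : Type*) [Field F] [CharZero F] (n k : ℕ) (hk : k ≤ n)
    (α : Fin n → ℕ)
    (hdeg : 2 * ∑ i : Fin (n - k), α (Fin.castLE (Nat.sub_le n k) i) < (n - k) * (n - k - 1)) :
    reynolds F n ((∏ i, MvPolynomial.X i ^ α i) * vandermondeDelta F n k) = 0 :=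
  stmt7_general F n k α hdeg
end

section
/- For every real symmetric n×n matrix A and 0 ≤ k ≤ n−2, sDisc_k(A) ≥ 0, and sDisc_k(A) = 0 if and only if A has at most n−k−1 distinct (real) eigenvalues. -/
/-!
Every summand of `sDisc_k` is a square, so the sum is nonnegative, and it vanishes exactly
when every summand does. The summand indexed by `s` is nonzero iff the eigenvalues indexed
by `s` are pairwise distinct, and a set of `n - k` indices with pairwise distinct eigenvalues
exists iff there are at least `n - k` distinct eigenvalues.
-/

open Finset

theorem prod_sq_sub_ne_zero_iff_injOn {ι R : Type*} [LinearOrder ι] [CommRing R] [IsDomain R]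
    (f : ι → R) (s : Finset ι) :
    ∏ p ∈ (s ×ˢ s).filter (fun p => p.1 < p.2), (f p.1 - f p.2) ^ 2 ≠ 0 ↔ Set.InjOn f s := by
  simp only [prod_ne_zero_iff, mem_filter, mem_product, ne_eq, pow_eq_zero_iff two_ne_zero,
    sub_eq_zero, and_imp, Prod.forall]
  constructor
  · intro h a ha b hb hab
    by_contra hne
    rcases lt_or_gt_of_ne hne with hlt | hlt
    · exact h a b ha hb hlt hab
    · exact h b a hb ha hlt hab.symm
  · intro h a b ha hb hlt hab
    exact hlt.ne (h ha hb hab)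

theorem exists_card_eq_injOn_iff_le_card_image {ι β : Type*} [DecidableEq β] (f : ι → β)
    (t : Finset ι) (m : ℕ) :
    (∃ s ⊆ t, #s = m ∧ Set.InjOn f s) ↔ m ≤ #(t.image f) := by
  constructor
  · rintro ⟨s, hst, rfl, hinj⟩
    rw [← card_image_of_injOn hinj]
    exact card_le_card (image_subset_image hst)
  · intro hm
    obtain ⟨v, hv, rfl⟩ := exists_subset_card_eq hm
    have hsurj : Set.SurjOn f t v := fun y hy => by simpa using hv hy
    obtain ⟨s, hst, hinj, rfl⟩ := exists_subset_injOn_image_eq_of_surjOn _ _ hsurj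
    exact ⟨s, hst, (card_image_of_injOn hinj).symm, hinj⟩

section Ordered

variable {R : Type*} [CommRing R] [LinearOrder R] [IsStrictOrderedRing R]

theorem sDiscVal_nonneg (n k : ℕ) (lam : Fin n → R) : 0 ≤ sDiscVal n k lam :=
  sum_nonneg fun _ _ => prod_nonneg fun _ _ => sq_nonneg _

theorem sDiscVal_eq_zero_iff_card_image_lt (n k : ℕ) (lam : Fin n → R) :
    sDiscVal n k lam = 0 ↔ #(univ.image lam) < n - k := by
  rw [sDiscVal, sum_eq_zero_iff_of_nonneg fun _ _ => prod_nonneg fun _ _ => sq_nonneg _,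
    ← not_le, ← exists_card_eq_injOn_iff_le_card_image]
  simp only [mem_powersetCard, subset_univ, true_and, ← prod_sq_sub_ne_zero_iff_injOn, ne_eq,
    not_exists, not_and, not_not]

end Ordered

/-- For every real symmetric `n×n` matrix `A`, `sDisc_k(A) ≥ 0`, with equality iff
`A` has at most `n−k−1` distinct (real) eigenvalues. -/
theorem stmt12 (n k : ℕ) (hn : 2 ≤ n) (hk : k ≤ n - 2)
    (A : Matrix (Fin n) (Fin n) ℝ) (hA : A.IsHermitian) :
    0 ≤ sDiscVal n k hA.eigenvalues ∧
      (sDiscVal n k hA.eigenvalues = 0 ↔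
        (Finset.univ.image hA.eigenvalues).card ≤ n - k - 1) := by
  refine ⟨sDiscVal_nonneg n k _, ?_⟩
  rw [sDiscVal_eq_zero_iff_card_image_lt]
  omega
end

section
/- Let N be the space of trace-zero real symmetric n×n matrices, and for a real symmetric matrix A define T_k(A) := ⋀_{i=1}^{n−k−1} (Aⁱ − (1/n)·Tr(Aⁱ)·I) ∈ ⋀^{n−k−1} N. Then T_k(A) = 0 if and only if A has at most n−k−1 distinct eigenvalues. -/
/-!
The factors `Aⁱ - (Tr Aⁱ / n) I` are the images of `Aⁱ` under the projection along `I` onto the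
trace-zero matrices, so their wedge is nonzero iff `I, A, …, A^(n-k-1)` are linearly independent.
A linear relation among these powers is a nonzero polynomial of degree `≤ n-k-1` annihilating `A`;
as `A` is diagonalisable, this means the polynomial vanishes on the spectrum of `A`, which is
possible iff `A` has at most `n-k-1` distinct eigenvalues.
-/

open Polynomial

theorem ExteriorAlgebra.ιMulti_eq_zero_iff {K M : Type*} [Field K] [AddCommGroup M] [Module K M]
    {m : ℕ} (v : Fin m → M) :
    ιMulti K m v = 0 ↔ ¬LinearIndependent K v := by
  refine ⟨fun h hv ↦ ?_, (ιMulti K m).map_linearDependent v⟩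
  let s : Set.powersetCard (Fin m) m := ⟨Finset.univ, by simp⟩
  apply (exteriorPower.ιMulti_family_linearIndependent_field (n := m) hv).ne_zero s
  have hid : (Set.powersetCard.ofFinEmbEquiv.symm s : Fin m → Fin m) = id :=
    (Set.powersetCard.ofFinEmbEquiv.symm s).strictMono.eq_id
  rw [← Subtype.coe_inj, exteriorPower.ιMulti_family_apply_coe, ExteriorAlgebra.ιMulti_family, hid]
  exact h

theorem linearIndependent_sub_smul_iff_finCons {K V : Type*} [Field K] [AddCommGroup V]
    [Module K V] (τ : V →ₗ[K] K) {e : V} (he : τ e ≠ 0) {m : ℕ} (w : Fin m → V) :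
    LinearIndependent K (fun i ↦ w i - (τ (w i) / τ e) • e) ↔
      LinearIndependent K (Fin.cons e w : Fin (m + 1) → V) := by
  let p : V →ₗ[K] V := LinearMap.id - (τ e)⁻¹ • τ.smulRight e
  have hp : (fun i ↦ w i - (τ (w i) / τ e) • e) = p ∘ w := by
    funext i; simp [p, div_eq_inv_mul, mul_smul]
  have hker : LinearMap.ker p = K ∙ e := by
    ext x
    simp only [LinearMap.mem_ker, Submodule.mem_span_singleton]
    refine ⟨fun hx ↦ ⟨(τ e)⁻¹ * τ x, ?_⟩, ?_⟩
    · rw [mul_smul, eq_comm, ← sub_eq_zero]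
      simpa [p] using hx
    · rintro ⟨a, rfl⟩
      simp [p, smul_smul, he]
  have he0 : e ≠ 0 := fun h ↦ he (by simp [h])
  rw [hp, linearIndependent_finCons, ← Submodule.disjoint_span_singleton' he0, ← hker]
  exact ⟨fun h ↦ ⟨h.of_comp, Submodule.range_ker_disjoint h⟩, fun h ↦ h.1.map h.2⟩

theorem Polynomial.linearIndependent_pow_iff {K S : Type*} [Field K] [Ring S] [Algebra K S]
    (x : S) (N : ℕ) :
    LinearIndependent K (fun i : Fin N ↦ x ^ (i : ℕ)) ↔
      ∀ p : K[X], p.degree < N → aeval x p = 0 → p = 0 := by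
  have aeval_symm (g : Fin N → K) :
      aeval x ((degreeLTEquiv K N).symm g : K[X]) = ∑ i, g i • x ^ (i : ℕ) := by
    simp [degreeLTEquiv, aeval_monomial, Algebra.smul_def]
  rw [Fintype.linearIndependent_iff]
  refine ⟨fun h p hp hx ↦ ?_, fun h g hg ↦ ?_⟩
  · rw [← mem_degreeLT] at hp
    rw [← degreeLTEquiv_eq_zero_iff_eq_zero hp]
    refine _root_.funext (h _ ?_)
    rwa [← aeval_symm, LinearEquiv.symm_apply_apply]
  · have hq := h _ (mem_degreeLT.1 ((degreeLTEquiv K N).symm g).2) ((aeval_symm g).trans hg)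
    rw [ZeroMemClass.coe_eq_zero, LinearEquiv.map_eq_zero_iff] at hq
    simp [hq]

theorem Polynomial.forall_eq_zero_of_degree_lt_of_eval_eq_zero_iff {K : Type*} [Field K]
    (s : Finset K) (N : ℕ) :
    (∀ p : K[X], p.degree < N → (∀ x ∈ s, p.eval x = 0) → p = 0) ↔ N ≤ s.card := by
  refine ⟨fun h ↦ ?_, fun hN p hp ↦ eq_zero_of_degree_lt_of_eval_finset_eq_zero s
    (hp.trans_le (by exact_mod_cast hN))⟩
  by_contra! hs
  have hne : Lagrange.nodal s (fun x : K ↦ x) ≠ 0 := Lagrange.nodal_ne_zero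
  refine hne (h _ ?_ fun x hx ↦ ?_)
  · rw [Lagrange.degree_nodal]; exact_mod_cast hs
  · exact Lagrange.eval_nodal_at_node (v := fun x : K ↦ x) hx

theorem Matrix.IsHermitian.aeval_eq_zero_iff {n 𝕜 : Type*} [RCLike 𝕜] [Fintype n] [DecidableEq n]
    {A : Matrix n n 𝕜} (hA : A.IsHermitian) (p : ℝ[X]) :
    aeval A p = 0 ↔ ∀ i, p.eval (hA.eigenvalues i) = 0 := by
  rw [← cfc_polynomial p A hA.isSelfAdjoint, ← cfc_zero ℝ A, cfc_eq_cfc_iff_eqOn,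
    hA.spectrum_real_eq_range_eigenvalues]
  exact Set.forall_mem_range

theorem Matrix.IsHermitian.linearIndependent_pow_iff {n 𝕜 : Type*} [RCLike 𝕜] [Fintype n]
    [DecidableEq n] {A : Matrix n n 𝕜} (hA : A.IsHermitian) (N : ℕ) :
    LinearIndependent ℝ (fun i : Fin N ↦ A ^ (i : ℕ)) ↔
      N ≤ (Finset.univ.image hA.eigenvalues).card := by
  rw [Polynomial.linearIndependent_pow_iff, ← forall_eq_zero_of_degree_lt_of_eval_eq_zero_iff]
  simp [hA.aeval_eq_zero_iff]

theorem stmt13_general (n k : ℕ) (hn : 2 ≤ n)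
    (A : Matrix (Fin n) (Fin n) ℝ) (hA : A.IsHermitian) :
    ExteriorAlgebra.ιMulti ℝ (n - k - 1)
        (fun i : Fin (n - k - 1) =>
          A ^ ((i : ℕ) + 1) -
            ((Matrix.trace (A ^ ((i : ℕ) + 1)) / n) • (1 : Matrix (Fin n) (Fin n) ℝ))) = 0 ↔
      (Finset.univ.image hA.eigenvalues).card ≤ n - k - 1 := by
  have htrace_one : Matrix.traceLinearMap (Fin n) ℝ ℝ 1 ≠ 0 := by
    simp only [Matrix.traceLinearMap_apply, Matrix.trace_one, Fintype.card_fin]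
    exact_mod_cast (by omega : n ≠ 0)
  have hcons : (Fin.cons 1 fun i : Fin (n - k - 1) ↦ A ^ ((i : ℕ) + 1)) =
      fun i : Fin (n - k - 1 + 1) ↦ A ^ (i : ℕ) := by
    funext i
    cases i using Fin.cases <;> simp
  have hindep := linearIndependent_sub_smul_iff_finCons _ htrace_one
    fun i : Fin (n - k - 1) ↦ A ^ ((i : ℕ) + 1)
  simp only [Matrix.traceLinearMap_apply, Matrix.trace_one, Fintype.card_fin, hcons] at hindep
  rw [ExteriorAlgebra.ιMulti_eq_zero_iff, hindep, hA.linearIndependent_pow_iff]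
  omega

/-- `T_k(A) := ⋀_{i=1}^{n−k−1} (Aⁱ − (1/n)·Tr(Aⁱ)·I)` vanishes iff the real symmetric
matrix `A` has at most `n−k−1` distinct eigenvalues. (The wedge is taken in the exterior
algebra of the space of matrices; the factors are trace-zero symmetric matrices.) -/
theorem stmt13 (n k : ℕ) (hn : 2 ≤ n) (hk : k ≤ n - 2)
    (A : Matrix (Fin n) (Fin n) ℝ) (hA : A.IsHermitian) :
    ExteriorAlgebra.ιMulti ℝ (n - k - 1)
        (fun i : Fin (n - k - 1) =>
          A ^ ((i : ℕ) + 1) -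
            ((Matrix.trace (A ^ ((i : ℕ) + 1)) / n) • (1 : Matrix (Fin n) (Fin n) ℝ))) = 0 ↔
      (Finset.univ.image hA.eigenvalues).card ≤ n - k - 1 :=
  stmt13_general n k hn A hA
end

section
/- A real symmetric n×n matrix A has at most n−k−1 distinct eigenvalues if and only if the matrices A − (1/n)Tr(A)I, A² − (1/n)Tr(A²)I, …, A^{n−k−1} − (1/n)Tr(A^{n−k−1})I are linearly dependent over ℝ. -/
/-!
Put `q = ∑ cᵢ X^(i+1)`. Then `∑ cᵢ (A^(i+1) - Tr(A^(i+1))/n • I) = q(A) - Tr(q(A))/n • I`, which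
vanishes iff `q(A)` is a scalar matrix (the scalar is then forced to be `Tr(q(A))/n`). By the
spectral theorem this means that `q` is constant on the spectrum `S` of `A`. Such a `q ≠ 0` of
degree `≤ m = n - k - 1` exists iff `#S ≤ m`: if `q = r` on `S`, the nonzero polynomial `q - r`
of degree `≤ m` has all of `S` among its roots; conversely `∏_{μ ∈ S} (X - μ)` minus its
constant term is such a `q`.
-/

open Polynomial Matrix

noncomputable def shiftedPoly {R : Type*} [Semiring R] {m : ℕ} (c : Fin m → R) : R[X] :=
  ∑ i : Fin m, monomial ((i : ℕ) + 1) (c i)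

section shiftedPoly

variable {R : Type*} {m : ℕ}

theorem coeff_shiftedPoly_succ [Semiring R] (c : Fin m → R) (i : Fin m) :
    (shiftedPoly c).coeff ((i : ℕ) + 1) = c i := by
  rw [shiftedPoly, finsetSum_coeff, Finset.sum_eq_single i]
  · simp
  · intro j _ hji
    rw [coeff_monomial, if_neg (by omega)]
  · simp

theorem natDegree_shiftedPoly_le [Semiring R] (c : Fin m → R) : (shiftedPoly c).natDegree ≤ m :=
  natDegree_sum_le_of_forall_le _ _ fun i _ => (natDegree_monomial_le _).trans i.isLt

theorem aeval_shiftedPoly [CommSemiring R] {B : Type*} [Semiring B] [Algebra R B] (c : Fin m → R)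
    (b : B) : aeval b (shiftedPoly c) = ∑ i, c i • b ^ ((i : ℕ) + 1) := by
  simp [shiftedPoly, aeval_monomial, Algebra.smul_def]

theorem eval_shiftedPoly_coeff_succ [CommSemiring R] (p : R[X]) (hp : p.natDegree ≤ m) (x : R) :
    eval x (shiftedPoly fun i : Fin m => p.coeff ((i : ℕ) + 1)) + p.coeff 0 = eval x p := by
  rw [eval_eq_sum_range' (Nat.lt_succ_of_le hp), Finset.sum_range_succ',
    ← Fin.sum_univ_eq_sum_range]
  simp [shiftedPoly, eval_finsetSum]

end shiftedPoly

theorem Finset.Nonempty.card_le_iff_exists_shiftedPoly_eval_const {R : Type*} [CommRing R]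
    [IsDomain R] {S : Finset R} (hS : S.Nonempty) (m : ℕ) :
    S.card ≤ m ↔ ∃ c : Fin m → R, c ≠ 0 ∧ ∃ r, ∀ x ∈ S, eval x (shiftedPoly c) = r := by
  constructor
  · intro hm
    set p := Lagrange.nodal S id
    have hp : p.Monic := Lagrange.nodal_monic
    have hdeg : p.natDegree = S.card := Lagrange.natDegree_nodal
    have hpos := hS.card_pos
    refine ⟨fun i => p.coeff ((i : ℕ) + 1), Function.ne_iff.mpr ⟨⟨S.card - 1, by omega⟩, ?_⟩,
      -p.coeff 0, fun x hx => ?_⟩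
    · show p.coeff (S.card - 1 + 1) ≠ 0
      rw [show S.card - 1 + 1 = p.natDegree by omega, hp.coeff_natDegree]
      exact one_ne_zero
    · have := eval_shiftedPoly_coeff_succ p (hdeg.trans_le hm) x
      rw [show eval x p = 0 from Lagrange.eval_nodal_at_node (v := id) hx] at this
      exact eq_neg_of_add_eq_zero_left this
  · rintro ⟨c, hc, r, hr⟩
    obtain ⟨i, hi⟩ := Function.ne_iff.mp hc
    have hq : shiftedPoly c - C r ≠ 0 := fun h => hi <| by
      simpa [coeff_shiftedPoly_succ] using congrArg (coeff · ((i : ℕ) + 1)) h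
    by_contra! hlt
    refine hq (eq_zero_of_natDegree_lt_card_of_eval_eq_zero' _ S (fun x hx => ?_) ?_)
    · simp [hr x hx]
    · refine (natDegree_sub_le _ _).trans_lt ?_
      simpa using (natDegree_shiftedPoly_le c).trans_lt hlt

theorem Matrix.IsHermitian.aeval_eq_smul_one_iff {𝕜 n : Type*} [RCLike 𝕜] [Fintype n]
    [DecidableEq n] {A : Matrix n n 𝕜} (hA : A.IsHermitian) (q : 𝕜[X]) (r : 𝕜) :
    aeval A q = r • 1 ↔ ∀ j, q.eval (hA.eigenvalues j : 𝕜) = r := by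
  set φ := Unitary.conjStarAlgAut 𝕜 _ hA.eigenvectorUnitary
  have hAq : aeval A q = φ (diagonal fun j => q.eval (hA.eigenvalues j : 𝕜)) := by
    conv_lhs => rw [hA.spectral_theorem]
    rw [aeval_algHom_apply, ← diagonalAlgHom_apply 𝕜, aeval_algHom_apply, aeval_pi_apply]
    rfl
  have hφ : r • (1 : Matrix n n 𝕜) = φ (diagonal fun _ => r) := by
    rw [← smul_one_eq_diagonal, map_smul, map_one]
  rw [hAq, hφ, EmbeddingLike.apply_eq_iff_eq, diagonal_eq_diagonal_iff]

section trace

variable {K ι : Type*} [Field K] [Fintype ι] [DecidableEq ι]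

theorem Matrix.sub_trace_div_smul_one_eq_zero_iff
    (hι : (Fintype.card ι : K) ≠ 0) (M : Matrix ι ι K) :
    M - (M.trace / Fintype.card ι) • 1 = 0 ↔ ∃ r : K, M = r • 1 := by
  refine ⟨fun h => ⟨_, sub_eq_zero.mp h⟩, ?_⟩
  rintro ⟨r, rfl⟩
  simp [hι]

theorem Matrix.sum_smul_pow_sub_trace_div_smul_one {m : ℕ} (A : Matrix ι ι K) (c : Fin m → K) (d : K) :
    ∑ i, c i • (A ^ ((i : ℕ) + 1) - (trace (A ^ ((i : ℕ) + 1)) / d) • 1) =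
      aeval A (shiftedPoly c) - (trace (aeval A (shiftedPoly c)) / d) • 1 := by
  simp only [aeval_shiftedPoly, smul_sub, Finset.sum_sub_distrib, trace_sum, trace_smul,
    smul_smul, ← Finset.sum_smul, Finset.sum_div, smul_eq_mul, mul_div_assoc]

end trace

theorem stmt14_general (n k : ℕ) (hn : 2 ≤ n)
    (A : Matrix (Fin n) (Fin n) ℝ) (hA : A.IsHermitian) :
    (Finset.univ.image hA.eigenvalues).card ≤ n - k - 1 ↔
      ¬ LinearIndependent ℝ (fun i : Fin (n - k - 1) =>
          A ^ ((i : ℕ) + 1) -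
            ((Matrix.trace (A ^ ((i : ℕ) + 1)) / n) • (1 : Matrix (Fin n) (Fin n) ℝ))) := by
  have : NeZero n := ⟨by omega⟩
  have hcard : (Fintype.card (Fin n) : ℝ) ≠ 0 := by simp [NeZero.ne]
  have hS : (Finset.univ.image hA.eigenvalues).Nonempty := Finset.univ_nonempty.image _
  rw [hS.card_le_iff_exists_shiftedPoly_eval_const, Fintype.not_linearIndependent_iff]
  refine exists_congr fun c => ?_
  have hscalar := sub_trace_div_smul_one_eq_zero_iff hcard (aeval A (shiftedPoly c))
  rw [Fintype.card_fin] at hscalar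
  rw [sum_smul_pow_sub_trace_div_smul_one, hscalar, Function.ne_iff, and_comm]
  simp only [hA.aeval_eq_smul_one_iff, Finset.forall_mem_image, Finset.mem_univ, forall_const,
    Pi.zero_apply, RCLike.ofReal_real_eq_id, id]

/-- A real symmetric `n×n` matrix `A` has at most `n−k−1` distinct eigenvalues iff the
matrices `Aⁱ − (1/n)Tr(Aⁱ)I`, `i = 1,…,n−k−1`, are linearly dependent over `ℝ`. -/
theorem stmt14 (n k : ℕ) (hn : 2 ≤ n) (hk : k ≤ n - 2)
    (A : Matrix (Fin n) (Fin n) ℝ) (hA : A.IsHermitian) :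
    (Finset.univ.image hA.eigenvalues).card ≤ n - k - 1 ↔
      ¬ LinearIndependent ℝ (fun i : Fin (n - k - 1) =>
          A ^ ((i : ℕ) + 1) -
            ((Matrix.trace (A ^ ((i : ℕ) + 1)) / n) • (1 : Matrix (Fin n) (Fin n) ℝ))) :=
  stmt14_general n k hn A hA
end

section
/- The minimal degree of a non-zero homogeneous polynomial function on the space of n×n real symmetric matrices that vanishes on the set E_k of symmetric matrices with at most n−k−1 distinct eigenvalues is (n−k)(n−k−1)/2. -/
/-!
Write `m = n - k`. For the upper bound, take the determinant of the `m × m` matrix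
`((A ^ j) i i)_{i, j < m}`: it is homogeneous of degree `0 + 1 + ⋯ + (m - 1)` in the entries of
`A`; at `A = diag(0, 1, …, n - 1)` it is a nonzero Vandermonde determinant; and if `A` has at
most `m - 1` distinct eigenvalues, a nonzero polynomial `q` of degree `< m` kills `A`, so the
coefficient vector of `q` is in the kernel of that matrix.

For the lower bound, pull `f` back along `x ↦ U diag(x) Uᴴ`, where `U` diagonalises a matrix at
which `f` does not vanish. This gives a nonzero polynomial on `ℝⁿ` of the same degree vanishing
at every point with at most `m - 1` distinct coordinates, and such a polynomial has degree at
least `m(m - 1)/2` (Kleitman–Lovász): restricted to the coordinates of a non-zero with the fewest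
distinct values, it vanishes on all diagonals, hence is divisible by a Vandermonde product.
-/

open MvPolynomial Matrix Finset

namespace MvPolynomial

variable {R σ : Type*} [CommRing R]

/-- Unlike `optionEquivLeft`, the coefficient ring keeps the variable `X i`, so that evaluating
at `X i` recovers the polynomial and evaluating at `X c` substitutes `x_i := x_c`. -/
noncomputable def toPolynomialIn [DecidableEq σ] (i : σ) :
    MvPolynomial σ R →ₐ[R] Polynomial (MvPolynomial σ R) :=
  aeval (Function.update (fun b => Polynomial.C (X b)) i Polynomial.X)

lemma eval_X_toPolynomialIn [DecidableEq σ] (i c : σ) (h : MvPolynomial σ R) :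
    (toPolynomialIn i h).eval (X c) = rename (Function.update id i c) h := by
  induction h using MvPolynomial.induction_on with
  | C r => simp [toPolynomialIn, Polynomial.algebraMap_apply]
  | add p q hp hq => simp [hp, hq]
  | mul_X p b hp =>
    rcases eq_or_ne b i with rfl | hb
    · simp [toPolynomialIn, ← hp]
    · simp [toPolynomialIn, ← hp, hb]

theorem prod_X_sub_X_dvd [DecidableEq σ] [IsDomain R] {i : σ} {t : Finset σ}
    {h : MvPolynomial σ R} (hh : ∀ a ∈ t, rename (Function.update id i a) h = 0) :
    ∏ a ∈ t, (X i - X a) ∣ h := by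
  set H := toPolynomialIn i h
  have hH : H.eval (X i) = h := by
    rw [eval_X_toPolynomialIn, show Function.update id i i = id from Function.update_eq_self i id,
      rename_id_apply]
  rcases eq_or_ne H 0 with H0 | H0
  · simp [← hH, H0]
  have hroots : t.val.map X ≤ H.roots := by
    refine (Multiset.le_iff_subset <|
      (Multiset.nodup_map_iff_of_injective X_injective).mpr t.nodup).mpr fun r hr => ?_
    obtain ⟨a, ha, rfl⟩ := Multiset.mem_map.mp hr
    rw [Polynomial.mem_roots H0, Polynomial.IsRoot, eval_X_toPolynomialIn]
    exact hh a ha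
  obtain ⟨Q, hQ⟩ := (Multiset.prod_X_sub_C_dvd_iff_le_roots H0 _).mpr hroots
  refine ⟨Q.eval (X i), ?_⟩
  rw [← hH, hQ, Polynomial.eval_mul, Multiset.map_map, Polynomial.eval_multiset_prod]
  simp [Finset.prod_eq_multiset_prod, -prod_map_val]

theorem choose_card_two_le_totalDegree [DecidableEq σ] [IsDomain R] {s : Finset σ}
    {h : MvPolynomial σ R} (h0 : h ≠ 0)
    (hh : ∀ a ∈ s, ∀ b ∈ s, a ≠ b → rename (Function.update id a b) h = 0) :
    (#s).choose 2 ≤ h.totalDegree := by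
  induction s using Finset.induction_on generalizing h with
  | empty => simp
  | insert i t hi ih =>
    have hit : ∀ a ∈ t, a ≠ i := fun a ha => ne_of_mem_of_not_mem ha hi
    obtain ⟨q, rfl⟩ := prod_X_sub_X_dvd fun a ha =>
      hh i (mem_insert_self i t) a (mem_insert_of_mem ha) (hit a ha).symm
    have hfac : ∀ a ∈ t, X i - X a ≠ (0 : MvPolynomial σ R) := fun a ha =>
      sub_ne_zero.mpr fun e => hit a ha (X_injective e).symm
    have hv : ∏ a ∈ t, (X i - X a) ≠ (0 : MvPolynomial σ R) := prod_ne_zero_iff.mpr hfac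
    have hq : q ≠ 0 := right_ne_zero_of_mul h0
    -- Substituting `x_a := x_b` inside `t` keeps every factor `X i - X c` nonzero.
    have hqt : ∀ a ∈ t, ∀ b ∈ t, a ≠ b → rename (Function.update id a b) q = 0 := by
      intro a ha b hb hab
      have hvq := hh a (mem_insert_of_mem ha) b (mem_insert_of_mem hb) hab
      rw [map_mul, map_prod] at hvq
      refine (mul_eq_zero.mp hvq).resolve_left (prod_ne_zero_iff.mpr fun c hc => ?_)
      have hc' : Function.update id a b c ∈ t := by
        rcases eq_or_ne c a with rfl | hca
        · simpa using hb
        · simpa [Function.update_of_ne hca] using hc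
      simpa [Function.update_of_ne (hit a ha).symm] using hfac _ hc'
    have hdeg : (∏ a ∈ t, (X i - X a) : MvPolynomial σ R).totalDegree = #t := by
      refine IsHomogeneous.totalDegree ?_ hv
      simpa using IsHomogeneous.prod t _ (fun _ => 1)
        fun a _ => (isHomogeneous_X R i).sub (isHomogeneous_X R a)
    rw [totalDegree_mul_of_isDomain hv hq, hdeg, card_insert_of_notMem hi, Nat.choose_succ_succ',
      Nat.choose_one_right]
    exact Nat.add_le_add_left (ih hq hqt) _

section Infinite

variable [IsDomain R] [Infinite R]

lemma rename_update_eq_zero_of_eval_eq_zero [DecidableEq σ] {a b : σ} {h : MvPolynomial σ R}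
    (hh : ∀ y : σ → R, y a = y b → eval y h = 0) : rename (Function.update id a b) h = 0 :=
  MvPolynomial.funext fun y => by
    rw [eval_rename, map_zero]
    exact hh _ (by simp [Function.update_apply])

theorem choose_two_le_totalDegree_of_eval_eq_zero [Fintype σ] [DecidableEq R] {c : ℕ}
    {g : MvPolynomial σ R} (hg : g ≠ 0)
    (hvan : ∀ x : σ → R, #(univ.image x) ≤ c → eval x g = 0) :
    (c + 1).choose 2 ≤ g.totalDegree := by
  have hex : ∃ m, ∃ y : σ → R, #(univ.image y) = m ∧ eval y g ≠ 0 := by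
    obtain ⟨y, hy⟩ : ∃ y, eval y g ≠ 0 := by
      by_contra! H
      exact hg (MvPolynomial.funext (by simpa using H))
    exact ⟨_, y, rfl, hy⟩
  classical
  -- a non-zero `y` of `g` with the fewest distinct coordinates
  obtain ⟨y, hy_card, hy⟩ := Nat.find_spec hex
  set S := univ.image y
  have hmin : ∀ x : σ → R, #(univ.image x) < #S → eval x g = 0 := fun x hx => by
    by_contra hx0
    exact Nat.find_min hex (hy_card ▸ hx) ⟨x, rfl, hx0⟩
  have hc : c < #S := by
    by_contra! hS
    exact hy (hvan y hS)
  -- `g` as a polynomial in one variable per value of `y`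
  let π : σ → S := fun j => ⟨y j, mem_image_of_mem y (mem_univ j)⟩
  have hG : rename π g ≠ 0 := fun h0 => hy <| by
    have hval := congrArg (eval (Subtype.val : S → R)) h0
    rwa [eval_rename, map_zero] at hval
  have hdiag : ∀ a ∈ (univ : Finset S), ∀ b ∈ univ, a ≠ b →
      rename (Function.update id a b) (rename π g) = 0 := by
    intro a _ b _ hab
    refine rename_update_eq_zero_of_eval_eq_zero fun z hz => ?_
    rw [eval_rename]
    refine hmin _ (lt_of_le_of_lt (card_le_card (t := univ.image z) ?_) ?_)
    · exact image_subset_iff.mpr fun j _ => mem_image_of_mem z (mem_univ _)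
    · rw [← Fintype.card_coe S, ← card_univ]
      refine lt_of_le_of_ne card_image_le fun heq => hab ?_
      exact (card_image_iff.mp heq) (mem_coe.mpr (mem_univ a)) (mem_coe.mpr (mem_univ b)) hz
  calc (c + 1).choose 2 ≤ (#S).choose 2 := Nat.choose_le_choose 2 hc
    _ = (#(univ : Finset S)).choose 2 := by rw [card_univ, Fintype.card_coe]
    _ ≤ (rename π g).totalDegree := choose_card_two_le_totalDegree hG hdiag
    _ ≤ g.totalDegree := totalDegree_rename_le π g

end Infinite

end MvPolynomial

namespace Matrix

variable {n : Type*} [Fintype n] [DecidableEq n]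

lemma IsHermitian.aeval_eq_zero {𝕜 : Type*} [RCLike 𝕜] {A : Matrix n n 𝕜} (hA : A.IsHermitian)
    {q : Polynomial ℝ} (hq : ∀ i, q.eval (hA.eigenvalues i) = 0) : Polynomial.aeval A q = 0 := by
  rw [← cfc_polynomial q A hA.isSelfAdjoint, ← cfc_zero ℝ A]
  refine cfc_congr fun x hx => ?_
  obtain ⟨i, rfl⟩ := hA.spectrum_real_eq_range_eigenvalues ▸ hx
  exact hq i

def diagPowMatrix {R : Type*} [CommRing R] {m : ℕ} (A : Matrix n n R) (e : Fin m → n) :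
    Matrix (Fin m) (Fin m) R :=
  of fun i j => (A ^ (j : ℕ)) (e i) (e i)

lemma diagPowMatrix_diagonal {R : Type*} [CommRing R] {m : ℕ} (d : n → R) (e : Fin m → n) :
    diagPowMatrix (diagonal d) e = vandermonde (d ∘ e) := by
  ext i j
  simp [diagPowMatrix, diagonal_pow]

lemma map_diagPowMatrix {R S : Type*} [CommRing R] [CommRing S] {m : ℕ} (f : R →+* S)
    (A : Matrix n n R) (e : Fin m → n) :
    (diagPowMatrix A e).map f = diagPowMatrix (f.mapMatrix A) e := by
  ext i j
  change f ((A ^ (j : ℕ)) (e i) (e i)) = (f.mapMatrix A ^ (j : ℕ)) (e i) (e i)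
  rw [← map_pow]
  rfl

lemma eval_det_diagPowMatrix_mvPolynomialX {R : Type*} [CommRing R] {m : ℕ}
    (A : Matrix n n R) (e : Fin m → n) :
    eval (fun p => A p.1 p.2) (diagPowMatrix (mvPolynomialX n n R) e).det =
      (diagPowMatrix A e).det := by
  rw [RingHom.map_det, RingHom.mapMatrix_apply, map_diagPowMatrix, mvPolynomialX_mapMatrix_eval]

lemma det_diagPowMatrix_eq_zero {K : Type*} [Field K] {m : ℕ} {A : Matrix n n K}
    (e : Fin m → n) {q : Polynomial K} (hq0 : q ≠ 0) (hdeg : q.natDegree < m)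
    (hA : Polynomial.aeval A q = 0) : (diagPowMatrix A e).det = 0 := by
  refine exists_mulVec_eq_zero_iff.mp ⟨fun j => q.coeff j, fun h0 => hq0 ?_, ?_⟩
  · exact Polynomial.leadingCoeff_eq_zero.mp (congrFun h0 ⟨_, hdeg⟩)
  · ext i
    rw [Polynomial.aeval_eq_sum_range' hdeg] at hA
    simpa [mulVec, dotProduct, diagPowMatrix, Matrix.sum_apply, Fin.sum_univ_eq_sum_range
      (fun j => (A ^ j) (e i) (e i) * q.coeff j), mul_comm] using congrFun (congrFun hA (e i)) (e i)

lemma isHomogeneous_pow_apply {σ R : Type*} [CommRing R] {M : Matrix n n (MvPolynomial σ R)}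
    (hM : ∀ a b, (M a b).IsHomogeneous 1) (j : ℕ) (a b : n) : ((M ^ j) a b).IsHomogeneous j := by
  induction j generalizing a b with
  | zero =>
    rcases eq_or_ne a b with rfl | hab
    · simpa using isHomogeneous_one σ R
    · simpa [one_apply_ne hab] using isHomogeneous_zero σ R 0
  | succ j ih =>
    rw [pow_succ, mul_apply]
    exact IsHomogeneous.sum _ _ _ fun c _ => (ih a c).mul (hM c b)

lemma isHomogeneous_det {σ R : Type*} [CommRing R] {M : Matrix n n (MvPolynomial σ R)}
    {w : n → ℕ} (hM : ∀ i j, (M i j).IsHomogeneous (w j)) : M.det.IsHomogeneous (∑ j, w j) := by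
  rw [det_apply]
  refine IsHomogeneous.sum _ _ _ fun τ _ => ?_
  have hprod := IsHomogeneous.prod univ (fun i => M (τ i) i) w fun i _ => hM (τ i) i
  rw [Units.smul_def]
  exact (homogeneousSubmodule σ R _).toAddSubgroup.zsmul_mem hprod _

lemma isHomogeneous_det_diagPowMatrix_mvPolynomialX {R : Type*} [CommRing R] {m : ℕ}
    (e : Fin m → n) :
    (diagPowMatrix (mvPolynomialX n n R) e).det.IsHomogeneous (∑ j : Fin m, (j : ℕ)) :=
  isHomogeneous_det fun i j =>
    isHomogeneous_pow_apply (fun a b => isHomogeneous_X R (a, b)) j (e i) (e i)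

lemma eval_mapMatrix_mul_diagonal_X_mul {R : Type*} [CommRing R] (U V : Matrix n n R)
    (x : n → R) :
    (eval x).mapMatrix (U.map C * diagonal X * V.map C) = U * diagonal x * V := by
  simp only [map_mul, RingHom.mapMatrix_apply, map_map, Function.comp_def, eval_C, map_id']
  rw [diagonal_map (map_zero _)]
  simp only [eval_X]

lemma isHomogeneous_mul_diagonal_X_mul_apply {R : Type*} [CommRing R] (U V : Matrix n n R)
    (a b : n) :
    ((U.map C * diagonal X * V.map C : Matrix n n (MvPolynomial n R)) a b).IsHomogeneous 1 := by
  rw [mul_apply]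
  refine IsHomogeneous.sum _ _ _ fun t _ => ?_
  rw [mul_diagonal, map_apply, map_apply]
  simpa using ((isHomogeneous_C _ (U a t)).mul (isHomogeneous_X R t)).mul
    (isHomogeneous_C _ (V t b))

lemma card_image_eigenvalues_conj_diagonal_le (U : unitary (Matrix n n ℝ)) (x : n → ℝ)
    (hB : ((U : Matrix n n ℝ) * diagonal x * star (U : Matrix n n ℝ)).IsHermitian) :
    #(univ.image hB.eigenvalues) ≤ #(univ.image x) := by
  refine card_le_card fun r hr => ?_
  obtain ⟨i, -, rfl⟩ := mem_image.mp hr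
  have hi := hB.eigenvalues_mem_spectrum_real i
  rw [Unitary.spectrum_star_right_conjugate, spectrum_diagonal] at hi
  obtain ⟨t, ht⟩ := hi
  exact ht ▸ mem_image_of_mem x (mem_univ t)

theorem choose_two_le_of_isHomogeneous_of_eval_eq_zero {f : MvPolynomial (n × n) ℝ} {c d : ℕ}
    (hf : f.IsHomogeneous d) {A : Matrix n n ℝ} (hA : A.IsHermitian)
    (hfA : eval (fun p => A p.1 p.2) f ≠ 0)
    (hvan : ∀ (B : Matrix n n ℝ) (hB : B.IsHermitian),
      #(univ.image hB.eigenvalues) ≤ c → eval (fun p => B p.1 p.2) f = 0) :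
    (c + 1).choose 2 ≤ d := by
  set U := hA.eigenvectorUnitary
  set P : Matrix n n (MvPolynomial n ℝ) :=
    (U : Matrix n n ℝ).map C * diagonal X * (star (U : Matrix n n ℝ)).map C
  set g := aeval (fun p : n × n => P p.1 p.2) f
  have hg : ∀ x, eval x g =
      eval (fun p => ((U : Matrix n n ℝ) * diagonal x * star (U : Matrix n n ℝ)) p.1 p.2) f := by
    intro x
    rw [← eval_mapMatrix_mul_diagonal_X_mul]
    exact (eval_assoc _ x f).symm
  have hBA : (U : Matrix n n ℝ) * diagonal hA.eigenvalues * star (U : Matrix n n ℝ) = A := by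
    conv_rhs => rw [hA.spectral_theorem]
    simp [U]
  have hg0 : g ≠ 0 := fun h0 => hfA <| by rw [← hBA, ← hg, h0, map_zero]
  have hgd : g.IsHomogeneous d := by
    simpa using hf.aeval _ fun p => isHomogeneous_mul_diagonal_X_mul_apply _ _ p.1 p.2
  rw [← hgd.totalDegree hg0]
  refine choose_two_le_totalDegree_of_eval_eq_zero hg0 fun x hx => ?_
  have hB : IsSelfAdjoint ((U : Matrix n n ℝ) * diagonal x * star (U : Matrix n n ℝ)) :=
    (isHermitian_diagonal x).isSelfAdjoint.conjugate _
  rw [hg]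
  exact hvan _ hB ((card_image_eigenvalues_conj_diagonal_le U x hB).trans hx)

end Matrix

/-- The minimal degree of a non-zero homogeneous polynomial function on the space of
real symmetric `n×n` matrices vanishing on the set `E_k` of symmetric matrices with at
most `n−k−1` distinct eigenvalues is `(n−k)(n−k−1)/2`. -/
theorem stmt15 (n k : ℕ) (hn : 2 ≤ n) (hk : k ≤ n - 2) :
    IsLeast {d : ℕ | ∃ f : MvPolynomial (Fin n × Fin n) ℝ,
        f.IsHomogeneous d ∧
        (∃ A : Matrix (Fin n) (Fin n) ℝ, A.IsHermitian ∧
          MvPolynomial.eval (fun p => A p.1 p.2) f ≠ 0) ∧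
        (∀ (A : Matrix (Fin n) (Fin n) ℝ) (hA : A.IsHermitian),
          (Finset.univ.image hA.eigenvalues).card ≤ n - k - 1 →
          MvPolynomial.eval (fun p => A p.1 p.2) f = 0)}
      ((n - k) * (n - k - 1) / 2) := by
  set e : Fin (n - k) → Fin n := Fin.castLE (Nat.sub_le n k)
  refine ⟨⟨(diagPowMatrix (mvPolynomialX (Fin n) (Fin n) ℝ) e).det, ?_, ?_, ?_⟩, ?_⟩
  · have hP := isHomogeneous_det_diagPowMatrix_mvPolynomialX (R := ℝ) e
    rwa [Fin.sum_univ_eq_sum_range (fun j => j), Finset.sum_range_id] at hP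
  · refine ⟨diagonal fun i => (i : ℝ), isHermitian_diagonal _, ?_⟩
    rw [eval_det_diagPowMatrix_mvPolynomialX, diagPowMatrix_diagonal, det_vandermonde_ne_zero_iff]
    intro i j hij
    simpa [e, Fin.ext_iff] using hij
  · intro A hA hcard
    set q := ∏ v ∈ univ.image hA.eigenvalues, (Polynomial.X - Polynomial.C v)
    have hq : q.Monic := Polynomial.monic_prod_of_monic _ _ fun v _ => Polynomial.monic_X_sub_C v
    rw [eval_det_diagPowMatrix_mvPolynomialX]
    refine det_diagPowMatrix_eq_zero e hq.ne_zero ?_ (hA.aeval_eq_zero fun i => ?_)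
    · rw [Polynomial.natDegree_prod_of_monic _ _ fun v _ => Polynomial.monic_X_sub_C v]
      simp only [Polynomial.natDegree_X_sub_C, sum_const, smul_eq_mul, mul_one]
      omega
    · rw [Polynomial.eval_prod]
      exact prod_eq_zero (mem_image_of_mem _ (mem_univ i)) (by simp)
  · rintro d ⟨f, hf, ⟨A, hA, hfA⟩, hvan⟩
    have hd := choose_two_le_of_isHomogeneous_of_eval_eq_zero hf hA hfA hvan
    rwa [Nat.sub_add_cancel (by omega), Nat.choose_two_right] at hd
end
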